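/- Let A be a unital C*-algebra and d ≥ 1, with data (w_{i,k}), (u_j), (m_i), (n_j), (c_i), r_k, θ₁, x = Σ_{j∈F} d_j u_j and c_x as in the context, and let ρ ≥ 0 be such that ‖r_k‖ ≤ ρ for all k ∈ ℤ^d. Then for every n ≥ 1 and every tuple ε̄ = (ε₁,…,ε_n) ∈ {−1,0,+1}^n with p := #{l : ε_l = 0}, the sum over all k̄ = (k₁,…,k_n) ∈ (ℤ^d)^n of ‖δ^{ε_n}_{k_n}(⋯(δ^{ε₁}_{k₁}(x))⋯)‖ is at most ρ^p·(2·θ₁·c_x)^n, and in particular is at most (1+ρ)^n·(2·θ₁·c_x)^n. -/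

import Mathlib

/-!
If `a` commutes with `w i k` and `(w i k)*` for all `k ∉ T i`, only the terms of
`r_k = ∑ c_i w_{i,k}` with `k ∈ T i` contribute to `δ_k(a) = [a, r_k]`; hence
`‖δ_k(a)‖ ≤ 2‖a‖ ∑_{i : k ∈ T i} |c_i|`, and summing over `k` gives `2θ‖a‖` with
`θ = ∑_i |c_i| |T i|`. Since `δ†_k(a) = (δ_k(a*))*`, the same bound holds for `δ†_k`, and `ℒ_k`
costs one more factor `ρ`. As `r_k` and `r_k*` commute with all `w_{i,k'}` and `w_{i,k'}*`, every
`δ^e_k(a)` commutes with the same `w_{i,k}` as `a`, so the estimate iterates to `ρ^p (2θ)^n ‖a‖`.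
For `u_j` one has `θ ≤ θ₁ n_j`, and linearity in `x = ∑ d_j u_j` together with
`∑ |d_j| n_j^n ≤ c_x^n` finishes. Sums of norms are taken in `ℝ≥0∞`, where every series
converges; summability in `ℝ` is recovered only at the end.
-/

open scoped BigOperators

/-- Iterated application of the (signed) derivations
`δ_k(a) = a r_k - r_k a` (sign `+1`), `δ†_k(a) = r_k* a - a r_k*` (sign `-1`),
and the Lindblad map `ℒ_k(a) = (1/2)(δ†_k(a) r_k + r_k* δ_k(a))` (sign `0`),
applied first with index `0` (innermost) and last with index `n-1` (outermost). -/
noncomputable def deltaIter {A K : Type*} [Ring A] [StarRing A] [Module ℂ A]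
    (r : K → A) {n : ℕ} (ε : Fin n → ℤ) (k : Fin n → K) (x : A) : A :=
  (List.ofFn fun l : Fin n => fun a : A =>
    if ε l = 1 then a * r (k l) - r (k l) * a
    else if ε l = -1 then star (r (k l)) * a - a * star (r (k l))
    else (2 : ℂ)⁻¹ • ((star (r (k l)) * a - a * star (r (k l))) * r (k l)
          + star (r (k l)) * (a * r (k l) - r (k l) * a))).foldl (fun a f => f a) x

open scoped ENNReal

section DeltaStep

variable {A K : Type*} [Ring A] [StarRing A] [Algebra ℂ A]

noncomputable def deltaStep (r : K → A) (e : ℤ) (k : K) : A →ₗ[ℂ] A where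
  toFun a :=
    if e = 1 then a * r k - r k * a
    else if e = -1 then star (r k) * a - a * star (r k)
    else (2 : ℂ)⁻¹ • ((star (r k) * a - a * star (r k)) * r k + star (r k) * (a * r k - r k * a))
  map_add' x y := by
    split_ifs
    · noncomm_ring
    · noncomm_ring
    · rw [← smul_add]; congr 1; noncomm_ring
  map_smul' z x := by
    simp only [RingHom.id_apply, mul_smul_comm, smul_mul_assoc, ← smul_sub, ← smul_add]
    split_ifs
    · rfl
    · rfl
    · rw [smul_comm]

theorem deltaStep_mem {S : Subalgebra ℂ A} {r : K → A} (e : ℤ) {k : K} {a : A} (ha : a ∈ S)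
    (hr : r k ∈ S) (hr' : star (r k) ∈ S) : deltaStep r e k a ∈ S := by
  simp only [deltaStep, LinearMap.coe_mk, AddHom.coe_mk]
  split_ifs <;> aesop

theorem deltaIter_succ (r : K → A) {n : ℕ} (ε : Fin (n + 1) → ℤ) (k : Fin (n + 1) → K) (x : A) :
    deltaIter r ε k x = deltaIter r (Fin.tail ε) (Fin.tail k) (deltaStep r (ε 0) (k 0) x) := by
  rw [deltaIter, deltaIter, List.ofFn_succ, List.foldl_cons]
  rfl

theorem deltaIter_sum_smul {J : Type*} (r : K → A) {n : ℕ} (ε : Fin n → ℤ) (k : Fin n → K)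
    (F : Finset J) (d : J → ℂ) (u : J → A) :
    deltaIter r ε k (∑ j ∈ F, d j • u j) = ∑ j ∈ F, d j • deltaIter r ε k (u j) := by
  induction n generalizing u with
  | zero => rfl
  | succ n ih => simp only [deltaIter_succ, map_sum, map_smul, ih]

def CommutesOutside {I : Type*} (w : I → K → A) (T : I → Set K) (a : A) : Prop :=
  ∀ i k, k ∉ T i → a ∈ Subalgebra.centralizer ℂ {w i k, star (w i k)}

theorem commutesOutside_noncommSet {I : Type*} (w : I → K → A) (a : A) :
    CommutesOutside w
      (fun i => {k | w i k * a ≠ a * w i k ∨ star (w i k) * a ≠ a * star (w i k)}) a := by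
  intro i k hk
  rintro g (rfl | rfl)
  exacts [not_not.1 (not_or.1 hk).1, not_not.1 (not_or.1 hk).2]

theorem star_mem_centralizer_pair {x a : A} (ha : a ∈ Subalgebra.centralizer ℂ {x, star x}) :
    star a ∈ Subalgebra.centralizer ℂ {x, star x} :=
  Set.star_mem_centralizer' (by rintro _ (rfl | rfl) <;> simp) ha

theorem commutesOutside_star {I : Type*} {w : I → K → A} {T : I → Set K} {a : A}
    (ha : CommutesOutside w T a) : CommutesOutside w T (star a) :=
  fun i k hk => star_mem_centralizer_pair (ha i k hk)

variable [TopologicalSpace A] [IsTopologicalRing A] [T2Space A] {I : Type*} {w : I → K → A}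

theorem mem_centralizer_of_hasSum (hwcomm : ∀ i k i' k', Commute (w i k) (w i' k'))
    (hwcommstar : ∀ i k i' k', Commute (star (w i k)) (w i' k')) {c : I → ℂ} {t : A} {k' : K}
    (ht : HasSum (fun i => c i • w i k') t) (i : I) (k : K) :
    t ∈ Subalgebra.centralizer ℂ {w i k, star (w i k)} := by
  rw [← ht.tsum_eq]
  rintro g (rfl | rfl)
  · exact (Commute.tsum_right _ fun i' => (hwcomm i k i' k').smul_right (c i')).eq
  · exact (Commute.tsum_right _ fun i' => (hwcommstar i k i' k').smul_right (c i')).eq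

theorem CommutesOutside.deltaStep_apply {T : I → Set K} {a : A}
    (hwcomm : ∀ i k i' k', Commute (w i k) (w i' k'))
    (hwcommstar : ∀ i k i' k', Commute (star (w i k)) (w i' k')) {c : I → ℂ} {r : K → A}
    (hr : ∀ k, HasSum (fun i => c i • w i k) (r k)) (ha : CommutesOutside w T a) (e : ℤ)
    (k' : K) : CommutesOutside w T (deltaStep r e k' a) := fun i k hk =>
  have hrk := mem_centralizer_of_hasSum hwcomm hwcommstar (hr k') i k
  deltaStep_mem e (ha i k hk) hrk (star_mem_centralizer_pair hrk)

end DeltaStep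

section ENorm

theorem enorm_mul_le {A : Type*} [NormedRing A] (a b : A) : ‖a * b‖ₑ ≤ ‖a‖ₑ * ‖b‖ₑ :=
  enorm_smul_le

theorem enorm_star {E : Type*} [SeminormedAddCommGroup E] [StarAddMonoid E] [NormedStarGroup E]
    (a : E) : ‖star a‖ₑ = ‖a‖ₑ := by
  simp [enorm]

theorem enorm_mul_sub_mul_le_of_hasSum {I A : Type*} [NormedRing A] {f : I → A} {t : A}
    (ht : HasSum f t) (a : A) {b : I → ℝ≥0∞} (hfb : ∀ i, ‖f i‖ₑ ≤ b i) {s : Set I}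
    (hs : ∀ i ∉ s, Commute a (f i)) :
    ‖a * t - t * a‖ₑ ≤ 2 * ‖a‖ₑ * ∑' i, s.indicator b i := by
  have hterm : ∀ i, ‖a * f i - f i * a‖ₑ ≤ 2 * ‖a‖ₑ * s.indicator b i := by
    intro i
    by_cases hi : i ∈ s
    · calc ‖a * f i - f i * a‖ₑ ≤ ‖a‖ₑ * ‖f i‖ₑ + ‖f i‖ₑ * ‖a‖ₑ :=
            enorm_sub_le.trans (add_le_add (enorm_mul_le _ _) (enorm_mul_le _ _))
        _ ≤ 2 * ‖a‖ₑ * s.indicator b i := by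
            rw [Set.indicator_of_mem hi, two_mul, add_mul, mul_comm ‖f i‖ₑ]
            gcongr <;> exact hfb i
    · simp [(hs i hi).eq]
  rw [← ((ht.mul_left a).sub (ht.mul_right a)).tsum_eq, ← ENNReal.tsum_mul_left]
  exact tsum_of_enorm_bounded ENNReal.summable.hasSum hterm

theorem tsum_pi_fin_succ {K : Type*} {n : ℕ} (f : (Fin (n + 1) → K) → ℝ≥0∞) :
    ∑' x, f x = ∑' k, ∑' y, f (Fin.cons k y) := by
  rw [← (Fin.consEquiv fun _ => K).tsum_eq, ENNReal.tsum_prod']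
  rfl

theorem tsum_enorm_mul_encard_le {I K E : Type*} [SeminormedAddCommGroup E] {c : I → E}
    {T : I → Set K} {μ : I → ℝ} (hT : ∀ i, (T i).Finite ∧ ((T i).ncard : ℝ) ≤ μ i) {θ : ℝ}
    (hθ : HasSum (fun i => ‖c i‖ * μ i) θ) :
    ∑' i, ‖c i‖ₑ * (T i).encard ≤ ENNReal.ofReal θ := by
  have hμ : ∀ i, 0 ≤ μ i := fun i => (Nat.cast_nonneg _).trans (hT i).2
  rw [← hθ.tsum_eq, ENNReal.ofReal_tsum_of_nonneg (fun i => mul_nonneg (norm_nonneg _) (hμ i))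
    hθ.summable]
  refine ENNReal.tsum_le_tsum fun i => ?_
  rw [ENNReal.ofReal_mul (norm_nonneg _), ofReal_norm, ← (hT i).1.cast_ncard_eq]
  gcongr
  simpa using ENNReal.ofReal_le_ofReal (hT i).2

theorem tsum_enorm_sum_smul_le_ofReal {β J E : Type*} [NormedAddCommGroup E] [NormedSpace ℂ E]
    (F : Finset J) (d : J → ℂ) {g : J → β → E} {B : J → ℝ} (hB : ∀ j ∈ F, 0 ≤ B j)
    (hg : ∀ j ∈ F, ∑' b, ‖g j b‖ₑ ≤ ENNReal.ofReal (B j)) :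
    ∑' b, ‖∑ j ∈ F, d j • g j b‖ₑ ≤ ENNReal.ofReal (∑ j ∈ F, ‖d j‖ * B j) := by
  calc ∑' b, ‖∑ j ∈ F, d j • g j b‖ₑ ≤ ∑' b, ∑ j ∈ F, ‖d j‖ₑ * ‖g j b‖ₑ :=
        ENNReal.tsum_le_tsum fun b => (enorm_sum_le F fun j => d j • g j b).trans
          (Finset.sum_le_sum fun j _ => enorm_smul_le)
    _ = ∑ j ∈ F, ‖d j‖ₑ * ∑' b, ‖g j b‖ₑ := by
        rw [Summable.tsum_finsetSum fun _ _ => ENNReal.summable]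
        simp only [ENNReal.tsum_mul_left]
    _ ≤ ∑ j ∈ F, ENNReal.ofReal (‖d j‖ * B j) := by
        gcongr with j hj
        rw [ENNReal.ofReal_mul (norm_nonneg _), ofReal_norm]
        gcongr
        exact hg j hj
    _ = _ := (ENNReal.ofReal_sum_of_nonneg fun j hj => mul_nonneg (norm_nonneg _) (hB j hj)).symm

theorem summable_norm_and_tsum_le_of_tsum_enorm_le {β E : Type*} [SeminormedAddCommGroup E]
    {f : β → E} {R : ℝ} (hR : 0 ≤ R) (h : ∑' b, ‖f b‖ₑ ≤ ENNReal.ofReal R) :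
    Summable (fun b => ‖f b‖) ∧ ∑' b, ‖f b‖ ≤ R := by
  have hfin : ∑' b, ‖f b‖ₑ ≠ ∞ := ne_top_of_le_ne_top ENNReal.ofReal_ne_top h
  have hsum : Summable (fun b => ‖f b‖) := tsum_enorm_ne_top_iff_summable_norm.1 hfin
  refine ⟨hsum, (ENNReal.ofReal_le_ofReal_iff hR).1 ?_⟩
  rw [ENNReal.ofReal_tsum_of_nonneg (fun _ => norm_nonneg _) hsum]
  simpa only [ofReal_norm] using h

end ENorm

section Lindblad

variable {A I K : Type*} [NormedRing A] [StarRing A] [NormedAlgebra ℂ A]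

noncomputable def noncommWeight (c : I → ℂ) (T : I → Set K) (k : K) : ℝ≥0∞ :=
  ∑' i, {i | k ∈ T i}.indicator (fun i => ‖c i‖ₑ) i

theorem tsum_noncommWeight (c : I → ℂ) (T : I → Set K) :
    ∑' k, noncommWeight c T k = ∑' i, ‖c i‖ₑ * (T i).encard := by
  simp only [noncommWeight]
  rw [ENNReal.tsum_comm]
  refine tsum_congr fun i => ?_
  have hind : ∀ k, {i | k ∈ T i}.indicator (fun i => ‖c i‖ₑ) i
      = (T i).indicator (fun _ => ‖c i‖ₑ) k := by
    intro k
    simp [Set.indicator]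
  rw [tsum_congr hind, ← tsum_subtype, ENNReal.tsum_set_const, mul_comm]

theorem CommutesOutside.enorm_commutator_le {w : I → K → A} {T : I → Set K} {a : A}
    (hwnorm : ∀ i k, ‖w i k‖ ≤ 1) {c : I → ℂ} {r : K → A}
    (hr : ∀ k, HasSum (fun i => c i • w i k) (r k)) (ha : CommutesOutside w T a) (k : K) :
    ‖a * r k - r k * a‖ₑ ≤ 2 * ‖a‖ₑ * noncommWeight c T k := by
  refine enorm_mul_sub_mul_le_of_hasSum (hr k) a (fun i => ?_) fun i hi => ?_
  · refine enorm_smul_le.trans (mul_le_of_le_one_right' ?_)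
    simpa [ofReal_norm] using ENNReal.ofReal_le_ofReal (hwnorm i k)
  · exact Commute.smul_right (Commute.symm (ha i k hi (w i k) (Set.mem_insert _ _))) (c i)

variable [NormedStarGroup A]

theorem CommutesOutside.enorm_star_commutator_le {w : I → K → A} {T : I → Set K} {a : A}
    (hwnorm : ∀ i k, ‖w i k‖ ≤ 1) {c : I → ℂ} {r : K → A}
    (hr : ∀ k, HasSum (fun i => c i • w i k) (r k)) (ha : CommutesOutside w T a) (k : K) :
    ‖star (r k) * a - a * star (r k)‖ₑ ≤ 2 * ‖a‖ₑ * noncommWeight c T k := by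
  have h := (commutesOutside_star ha).enorm_commutator_le hwnorm hr k
  rwa [← enorm_star, star_sub, star_mul, star_mul, star_star, enorm_star] at h

theorem CommutesOutside.enorm_deltaStep_le {w : I → K → A} {T : I → Set K} {a : A}
    (hwnorm : ∀ i k, ‖w i k‖ ≤ 1) {c : I → ℂ} {r : K → A}
    (hr : ∀ k, HasSum (fun i => c i • w i k) (r k)) {ρ : ℝ≥0∞} (hρ : ∀ k, ‖r k‖ₑ ≤ ρ)
    (ha : CommutesOutside w T a) {e : ℤ} (he : e = 1 ∨ e = 0 ∨ e = -1) (k : K) :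
    ‖deltaStep r e k a‖ₑ ≤ (if e = 0 then ρ else 1) * (2 * ‖a‖ₑ * noncommWeight c T k) := by
  have hδ := ha.enorm_commutator_le hwnorm hr k
  have hδ' := ha.enorm_star_commutator_le hwnorm hr k
  set B := 2 * ‖a‖ₑ * noncommWeight c T k
  rcases he with rfl | rfl | rfl
  · simpa [deltaStep] using hδ
  · simp only [deltaStep, LinearMap.coe_mk, AddHom.coe_mk]
    have hρ' : ‖star (r k)‖ₑ ≤ ρ := (enorm_star _).trans_le (hρ k)
    calc ‖(2 : ℂ)⁻¹ • ((star (r k) * a - a * star (r k)) * r k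
            + star (r k) * (a * r k - r k * a))‖ₑ
        ≤ 2⁻¹ * (B * ρ + ρ * B) := by
          refine enorm_smul_le.trans ?_
          rw [show ‖(2 : ℂ)⁻¹‖ₑ = 2⁻¹ by simp [enorm_eq_nnnorm]]
          gcongr
          exact (enorm_add_le _ _).trans (add_le_add ((enorm_mul_le _ _).trans
            (mul_le_mul' hδ' (hρ k))) ((enorm_mul_le _ _).trans (mul_le_mul' hρ' hδ)))
      _ = (if (0 : ℤ) = 0 then ρ else 1) * B := by
          rw [if_pos rfl, mul_comm B, ← two_mul, ← mul_assoc,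
            ENNReal.inv_mul_cancel two_ne_zero ENNReal.ofNat_ne_top, one_mul]
  · simpa [deltaStep] using hδ'

theorem CommutesOutside.tsum_enorm_deltaStep_le {w : I → K → A} {T : I → Set K} {a : A}
    (hwnorm : ∀ i k, ‖w i k‖ ≤ 1) {c : I → ℂ} {r : K → A}
    (hr : ∀ k, HasSum (fun i => c i • w i k) (r k)) {ρ : ℝ≥0∞} (hρ : ∀ k, ‖r k‖ₑ ≤ ρ)
    (ha : CommutesOutside w T a) {e : ℤ} (he : e = 1 ∨ e = 0 ∨ e = -1) :
    ∑' k, ‖deltaStep r e k a‖ₑ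
      ≤ (if e = 0 then ρ else 1) * (2 * ∑' i, ‖c i‖ₑ * (T i).encard) * ‖a‖ₑ := by
  calc ∑' k, ‖deltaStep r e k a‖ₑ
      ≤ ∑' k, (if e = 0 then ρ else 1) * (2 * ‖a‖ₑ * noncommWeight c T k) :=
        ENNReal.tsum_le_tsum (ha.enorm_deltaStep_le hwnorm hr hρ he)
    _ = _ := by
        rw [ENNReal.tsum_mul_left, ENNReal.tsum_mul_left, tsum_noncommWeight]
        ring

theorem CommutesOutside.tsum_enorm_deltaIter_le {w : I → K → A} {T : I → Set K}
    (hwcomm : ∀ i k i' k', Commute (w i k) (w i' k'))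
    (hwcommstar : ∀ i k i' k', Commute (star (w i k)) (w i' k'))
    (hwnorm : ∀ i k, ‖w i k‖ ≤ 1) {c : I → ℂ} {r : K → A}
    (hr : ∀ k, HasSum (fun i => c i • w i k) (r k)) {ρ : ℝ≥0∞} (hρ : ∀ k, ‖r k‖ₑ ≤ ρ)
    {n : ℕ} {ε : Fin n → ℤ} (hε : ∀ l, ε l = 1 ∨ ε l = 0 ∨ ε l = -1) {a : A}
    (ha : CommutesOutside w T a) :
    ∑' kb : Fin n → K, ‖deltaIter r ε kb a‖ₑ
      ≤ (∏ l, if ε l = 0 then ρ else 1) * (2 * ∑' i, ‖c i‖ₑ * (T i).encard) ^ n * ‖a‖ₑ := by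
  induction n generalizing a with
  | zero => simp [deltaIter]
  | succ n ih =>
    set θ := ∑' i, ‖c i‖ₑ * (T i).encard
    calc ∑' kb : Fin (n + 1) → K, ‖deltaIter r ε kb a‖ₑ
        = ∑' k, ∑' y, ‖deltaIter r (Fin.tail ε) y (deltaStep r (ε 0) k a)‖ₑ := by
          simp only [tsum_pi_fin_succ, deltaIter_succ, Fin.tail_cons, Fin.cons_zero]
      _ ≤ ∑' k, (∏ l : Fin n, if ε l.succ = 0 then ρ else 1) * (2 * θ) ^ n
            * ‖deltaStep r (ε 0) k a‖ₑ :=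
          ENNReal.tsum_le_tsum fun k =>
            ih (fun l => hε l.succ) (ha.deltaStep_apply hwcomm hwcommstar hr (ε 0) k)
      _ = (∏ l : Fin n, if ε l.succ = 0 then ρ else 1) * (2 * θ) ^ n
            * ∑' k, ‖deltaStep r (ε 0) k a‖ₑ := ENNReal.tsum_mul_left
      _ ≤ (∏ l : Fin n, if ε l.succ = 0 then ρ else 1) * (2 * θ) ^ n
            * ((if ε 0 = 0 then ρ else 1) * (2 * θ) * ‖a‖ₑ) := by
          gcongr
          exact ha.tsum_enorm_deltaStep_le hwnorm hr hρ (hε 0)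
      _ = _ := by
          rw [Fin.prod_univ_succ, pow_succ]
          ring

theorem CommutesOutside.tsum_enorm_deltaIter_le_ofReal {w : I → K → A} {T : I → Set K}
    (hwcomm : ∀ i k i' k', Commute (w i k) (w i' k'))
    (hwcommstar : ∀ i k i' k', Commute (star (w i k)) (w i' k'))
    (hwnorm : ∀ i k, ‖w i k‖ ≤ 1) {c : I → ℂ} {r : K → A}
    (hr : ∀ k, HasSum (fun i => c i • w i k) (r k)) {ρ : ℝ} (hρ : 0 ≤ ρ)
    (hrnorm : ∀ k, ‖r k‖ ≤ ρ) {μ : I → ℝ} (hT : ∀ i, (T i).Finite ∧ ((T i).ncard : ℝ) ≤ μ i)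
    {θ : ℝ} (hθ : HasSum (fun i => ‖c i‖ * μ i) θ)
    {n : ℕ} {ε : Fin n → ℤ} (hε : ∀ l, ε l = 1 ∨ ε l = 0 ∨ ε l = -1) {a : A}
    (ha : CommutesOutside w T a) :
    ∑' kb : Fin n → K, ‖deltaIter r ε kb a‖ₑ
      ≤ ENNReal.ofReal (ρ ^ (Finset.univ.filter fun l => ε l = 0).card * (2 * θ) ^ n * ‖a‖) := by
  have hθ0 : 0 ≤ θ :=
    hθ.nonneg fun i => mul_nonneg (norm_nonneg _) ((Nat.cast_nonneg _).trans (hT i).2)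
  have hρ' : ∀ k, ‖r k‖ₑ ≤ ENNReal.ofReal ρ := fun k => by
    simpa only [ofReal_norm] using ENNReal.ofReal_le_ofReal (hrnorm k)
  calc ∑' kb : Fin n → K, ‖deltaIter r ε kb a‖ₑ
      ≤ (∏ l, if ε l = 0 then ENNReal.ofReal ρ else 1)
          * (2 * ∑' i, ‖c i‖ₑ * (T i).encard) ^ n * ‖a‖ₑ :=
        ha.tsum_enorm_deltaIter_le hwcomm hwcommstar hwnorm hr hρ' hε
    _ ≤ ENNReal.ofReal ρ ^ (Finset.univ.filter fun l => ε l = 0).card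
          * (2 * ENNReal.ofReal θ) ^ n * ‖a‖ₑ := by
        rw [Finset.prod_ite, Finset.prod_const_one, mul_one, Finset.prod_const]
        gcongr
        exact tsum_enorm_mul_encard_le hT hθ
    _ = _ := by
        rw [ENNReal.ofReal_mul (by positivity), ENNReal.ofReal_mul (by positivity),
          ENNReal.ofReal_pow hρ, ENNReal.ofReal_pow (by positivity),
          ENNReal.ofReal_mul zero_le_two, ENNReal.ofReal_ofNat, ofReal_norm]

end Lindblad

theorem lemma31iii_general
    {A : Type*} [NormedRing A] [StarRing A] [CStarRing A] [NormedAlgebra ℂ A]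
    {I J : Type*}
    (d : ℕ)
    (w : I → (Fin d → ℤ) → A) (hwnorm : ∀ i k, ‖w i k‖ ≤ 1)
    (hwcomm : ∀ i k i' k', Commute (w i k) (w i' k'))
    (hwcommstar : ∀ i k i' k', Commute (star (w i k)) (w i' k'))
    (u : J → A) (hunorm : ∀ j, ‖u j‖ ≤ 1)
    (m : I → ℝ) (hm : ∀ i, 0 ≤ m i) (ν : J → ℝ) (hν : ∀ j, 0 ≤ ν j)
    (hfin : ∀ i j,
      ({k : Fin d → ℤ | w i k * u j ≠ u j * w i k ∨
          star (w i k) * u j ≠ u j * star (w i k)}).Finite ∧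
        (({k : Fin d → ℤ | w i k * u j ≠ u j * w i k ∨
            star (w i k) * u j ≠ u j * star (w i k)}).ncard : ℝ) ≤ m i * ν j)
    (c : I → ℂ)
    (θ₁ : ℝ) (hθ : HasSum (fun i => ‖c i‖ * m i) θ₁)
    (r : (Fin d → ℤ) → A) (hr : ∀ k, HasSum (fun i => c i • w i k) (r k))
    (ρ : ℝ) (hρ : 0 ≤ ρ) (hrnorm : ∀ k, ‖r k‖ ≤ ρ)
    (F : Finset J) (dcoef : J → ℂ) (x : A) (hx : x = ∑ j ∈ F, dcoef j • u j)
    (cx : ℝ) (hcx1 : 1 ≤ cx)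
    (hcx : ∀ M : ℕ, 1 ≤ M → ∑ j ∈ F, ‖dcoef j‖ * ν j ^ M ≤ cx ^ M)
    (n : ℕ) (hn : 1 ≤ n) (ε : Fin n → ℤ)
    (hε : ∀ l, ε l = 1 ∨ ε l = 0 ∨ ε l = -1)
    (p : ℕ) (hp : p = (Finset.univ.filter fun l : Fin n => ε l = 0).card) :
    Summable (fun kbar : Fin n → (Fin d → ℤ) => ‖deltaIter r ε kbar x‖) ∧
      (∑' kbar : Fin n → (Fin d → ℤ), ‖deltaIter r ε kbar x‖
          ≤ ρ ^ p * (2 * θ₁ * cx) ^ n) ∧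
      ∑' kbar : Fin n → (Fin d → ℤ), ‖deltaIter r ε kbar x‖
          ≤ (1 + ρ) ^ n * (2 * θ₁ * cx) ^ n := by
  have hθ₁ : 0 ≤ θ₁ := hθ.nonneg fun i => mul_nonneg (norm_nonneg _) (hm i)
  have hu : ∀ j, ∑' kb, ‖deltaIter r ε kb (u j)‖ₑ
      ≤ ENNReal.ofReal (ρ ^ p * (2 * (θ₁ * ν j)) ^ n * ‖u j‖) := fun j =>
    hp ▸ (commutesOutside_noncommSet w (u j)).tsum_enorm_deltaIter_le_ofReal hwcomm hwcommstar
      hwnorm hr hρ hrnorm (fun i => hfin i j) (by simpa only [mul_assoc] using hθ.mul_right (ν j)) hε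
  have hxle : ∑' kb, ‖deltaIter r ε kb x‖ₑ ≤ ENNReal.ofReal (ρ ^ p * (2 * θ₁ * cx) ^ n) := by
    simp only [hx, deltaIter_sum_smul]
    refine (tsum_enorm_sum_smul_le_ofReal F dcoef (fun j _ => by have := hν j; positivity)
      fun j _ => hu j).trans (ENNReal.ofReal_le_ofReal ?_)
    calc ∑ j ∈ F, ‖dcoef j‖ * (ρ ^ p * (2 * (θ₁ * ν j)) ^ n * ‖u j‖)
        ≤ ∑ j ∈ F, ρ ^ p * (2 * θ₁) ^ n * (‖dcoef j‖ * ν j ^ n) := by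
          refine Finset.sum_le_sum fun j _ => ?_
          have := hν j
          calc _ = ρ ^ p * (2 * θ₁) ^ n * (‖dcoef j‖ * ν j ^ n) * ‖u j‖ := by ring
            _ ≤ _ := mul_le_of_le_one_right (by positivity) (hunorm j)
      _ ≤ ρ ^ p * (2 * θ₁) ^ n * cx ^ n := by
          rw [← Finset.mul_sum]
          gcongr
          exact hcx n hn
      _ = ρ ^ p * (2 * θ₁ * cx) ^ n := by ring
  obtain ⟨hsum, hle⟩ := summable_norm_and_tsum_le_of_tsum_enorm_le (by positivity) hxle
  refine ⟨hsum, hle, hle.trans ?_⟩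
  have hpn : p ≤ n := hp ▸ (Finset.card_filter_le _ _).trans_eq (Finset.card_fin n)
  gcongr
  exact (pow_le_pow_left₀ hρ (by linarith) p).trans (pow_le_pow_right₀ (by linarith) hpn)

/-- Lemma 3.1(iii): for signs `ε_l ∈ {-1, 0, +1}` with `p` zeros, the sum over all tuples
`k̄ ∈ (ℤ^d)^n` of `‖δ^{ε_n}_{k_n}(⋯(δ^{ε₁}_{k₁}(x))⋯)‖` is at most `ρ^p (2 θ₁ c_x)^n`,
and in particular at most `(1+ρ)^n (2 θ₁ c_x)^n`. -/
theorem lemma31iii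
    {A : Type*} [NormedRing A] [StarRing A] [CStarRing A] [NormedAlgebra ℂ A]
    [CompleteSpace A]
    {I J : Type*} [Countable I]
    (d : ℕ) (hd : 1 ≤ d)
    (w : I → (Fin d → ℤ) → A) (hwnorm : ∀ i k, ‖w i k‖ ≤ 1)
    (hwcomm : ∀ i k i' k', Commute (w i k) (w i' k'))
    (hwcommstar : ∀ i k i' k', Commute (star (w i k)) (w i' k'))
    (u : J → A) (hunorm : ∀ j, ‖u j‖ ≤ 1)
    (m : I → ℝ) (hm : ∀ i, 0 ≤ m i) (ν : J → ℝ) (hν : ∀ j, 0 ≤ ν j)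
    (hfin : ∀ i j,
      ({k : Fin d → ℤ | w i k * u j ≠ u j * w i k ∨
          star (w i k) * u j ≠ u j * star (w i k)}).Finite ∧
        (({k : Fin d → ℤ | w i k * u j ≠ u j * w i k ∨
            star (w i k) * u j ≠ u j * star (w i k)}).ncard : ℝ) ≤ m i * ν j)
    (c : I → ℂ) (hc : Summable fun i => ‖c i‖)
    (θ₁ : ℝ) (hθ : HasSum (fun i => ‖c i‖ * m i) θ₁)
    (r : (Fin d → ℤ) → A) (hr : ∀ k, HasSum (fun i => c i • w i k) (r k))
    (ρ : ℝ) (hρ : 0 ≤ ρ) (hrnorm : ∀ k, ‖r k‖ ≤ ρ)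
    (F : Finset J) (dcoef : J → ℂ) (x : A) (hx : x = ∑ j ∈ F, dcoef j • u j)
    (cx : ℝ) (hcx1 : 1 ≤ cx)
    (hcx : ∀ M : ℕ, 1 ≤ M → ∑ j ∈ F, ‖dcoef j‖ * ν j ^ M ≤ cx ^ M)
    (n : ℕ) (hn : 1 ≤ n) (ε : Fin n → ℤ)
    (hε : ∀ l, ε l = 1 ∨ ε l = 0 ∨ ε l = -1)
    (p : ℕ) (hp : p = (Finset.univ.filter fun l : Fin n => ε l = 0).card) :
    Summable (fun kbar : Fin n → (Fin d → ℤ) => ‖deltaIter r ε kbar x‖) ∧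
      (∑' kbar : Fin n → (Fin d → ℤ), ‖deltaIter r ε kbar x‖
          ≤ ρ ^ p * (2 * θ₁ * cx) ^ n) ∧
      ∑' kbar : Fin n → (Fin d → ℤ), ‖deltaIter r ε kbar x‖
          ≤ (1 + ρ) ^ n * (2 * θ₁ * cx) ^ n :=
  lemma31iii_general d w hwnorm hwcomm hwcommstar u hunorm m hm ν hν hfin c θ₁ hθ r hr ρ hρ hrnorm F
    dcoef x hx cx hcx1 hcx n hn ε hε p hp
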